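/- arXiv:2106.11502 — 3 statements merged into one kernel-verified Lean document; each statement's English description precedes it below -/
import Mathlib

section
/- The Simplified Bucklin voting method violates positive involvement: there exists a profile P, a candidate x ∈ SimplifiedBucklin(P), and a profile P' obtained from P by adding one new voter whose ballot ranks x in first place, such that x ∉ SimplifiedBucklin(P'). (A witness: P is the 4-voter profile on candidates {a,b,c,d,e} with ballots abced, aecbd, becda, cdabe, in which SimplifiedBucklin(P) = {a,c}; adding a voter with ballot cebda yields SimplifiedBucklin(P') = {e}.) -/
open scoped Classical

/-- `r` is a strict linear order on the finite set `X`, relating only members of `X`. -/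
def IsLinOn (X : Finset ℕ) (r : ℕ → ℕ → Prop) : Prop :=
  (∀ a b, r a b → a ∈ X ∧ b ∈ X) ∧
  (∀ a, ¬ r a a) ∧
  (∀ a b c, r a b → r b c → r a c) ∧
  (∀ a ∈ X, ∀ b ∈ X, a ≠ b → r a b ∨ r b a)

/-- A profile assigns to each voter in a nonempty finite set of voters a strict linear
order (ballot) on a nonempty finite set of candidates.  Voters and candidates are both
drawn from the infinite set `ℕ`. -/
structure Profile where
  voters : Finset ℕ
  cands : Finset ℕ
  voters_nonempty : voters.Nonempty
  cands_nonempty : cands.Nonempty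
  ballot : ℕ → ℕ → ℕ → Prop
  ballot_lin : ∀ i ∈ voters, IsLinOn cands (ballot i)

/-- `F` is a voting method: it assigns to each profile a nonempty set of winners
among the candidates of the profile. -/
def VotingMethod (F : Profile → Finset ℕ) : Prop :=
  ∀ P : Profile, (F P).Nonempty ∧ F P ⊆ P.cands

/-- The ballot `r` ranks `x` in first place among the candidates in `X`. -/
def RanksFirst (X : Finset ℕ) (r : ℕ → ℕ → Prop) (x : ℕ) : Prop :=
  x ∈ X ∧ ∀ y ∈ X, y ≠ x → r x y

/-- `P'` is obtained from `P` by adding one new voter `j` whose ballot ranks `x` in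
first place. -/
def AddVoter (P P' : Profile) (j x : ℕ) : Prop :=
  P'.cands = P.cands ∧ j ∉ P.voters ∧ P'.voters = insert j P.voters ∧
  (∀ i ∈ P.voters, ∀ a b, (P'.ballot i a b ↔ P.ballot i a b)) ∧
  RanksFirst P.cands (P'.ballot j) x

/-- `F` satisfies positive involvement (PI). -/
def SatisfiesPI (F : Profile → Finset ℕ) : Prop :=
  ∀ (P P' : Profile) (j x : ℕ), x ∈ F P → AddVoter P P' j x → x ∈ F P'

/-- The rank of `x` in the ballot `r` on the candidate set `X`:
one plus the number of candidates ranked above `x`. -/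
noncomputable def rankOf (X : Finset ℕ) (r : ℕ → ℕ → Prop) (x : ℕ) : ℕ :=
  (X.filter (fun b => r b x)).card + 1

/-- The number of voters of `P` who rank `x` in `n`-th place or higher. -/
noncomputable def countRank (P : Profile) (n : ℕ) (x : ℕ) : ℕ :=
  (P.voters.filter (fun i => rankOf P.cands (P.ballot i) x ≤ n)).card

/-- `x` is an `n`-th level majority winner in `P`. -/
noncomputable def nthMaj (P : Profile) (n : ℕ) (x : ℕ) : Prop :=
  2 * countRank P n x > P.voters.card

/-- The smallest positive `k` for which there is a `k`-th level majority winner. -/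
noncomputable def bucklinLevel (P : Profile) : ℕ :=
  sInf {n : ℕ | 0 < n ∧ ∃ x ∈ P.cands, nthMaj P n x}

/-- The Simplified Bucklin winners: where `k` is the smallest level at which some
candidate is a `k`-th level majority winner, all `k`-th level majority winners. -/
noncomputable def SimplifiedBucklin (P : Profile) : Finset ℕ :=
  P.cands.filter (fun x => nthMaj P (bucklinLevel P) x)

/-! In the profile `abced, aecbd, becda, cdabe` no candidate reaches a majority
among the top two places, while `a` and `c` reach one among the top three, so `c` wins at
level 3. The new ballot `cebda` ranks `c` first but also places `e` second, which gives `e` a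
second-level majority, so the level drops to 2, where `c` is no majority winner. -/

open Finset

theorem countRank_mono (P : Profile) (x : ℕ) : Monotone (fun n => countRank P n x) :=
  fun _ _ hnm => card_le_card <| Finset.monotone_filter_right _ fun _ _ h => h.trans hnm

theorem nthMaj.mono {P : Profile} {n m x : ℕ} (h : nthMaj P n x) (hnm : n ≤ m) :
    nthMaj P m x := by
  unfold nthMaj at h ⊢
  linarith [countRank_mono P x hnm]

theorem bucklinLevel_eq {P : Profile} {k x : ℕ} (hk : 0 < k) (hx : x ∈ P.cands)
    (hmaj : nthMaj P k x) (hbelow : ∀ y ∈ P.cands, ¬ nthMaj P (k - 1) y) :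
    bucklinLevel P = k := by
  have hmem : k ∈ {n : ℕ | 0 < n ∧ ∃ x ∈ P.cands, nthMaj P n x} := ⟨hk, x, hx, hmaj⟩
  refine le_antisymm (Nat.sInf_le hmem) (not_lt.1 fun hlt => ?_)
  obtain ⟨-, y, hy, hmajy⟩ := Nat.sInf_mem ⟨k, hmem⟩
  exact hbelow y hy (hmajy.mono (Nat.le_sub_one_of_lt hlt))

def listBallot (l : List ℕ) (a b : ℕ) : Prop :=
  a ∈ l ∧ b ∈ l ∧ l.idxOf a < l.idxOf b

theorem isLinOn_listBallot (l : List ℕ) : IsLinOn l.toFinset (listBallot l) := by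
  refine ⟨fun a b h => ⟨List.mem_toFinset.2 h.1, List.mem_toFinset.2 h.2.1⟩,
    fun a h => lt_irrefl _ h.2.2, fun a b c hab hbc => ⟨hab.1, hbc.2.1, hab.2.2.trans hbc.2.2⟩,
    fun a ha b hb hab => ?_⟩
  rw [List.mem_toFinset] at ha hb
  rcases lt_or_gt_of_ne (mt (List.idxOf_inj ha).1 hab) with h | h
  · exact Or.inl ⟨ha, hb, h⟩
  · exact Or.inr ⟨hb, ha, h⟩

theorem rankOf_listBallot {l : List ℕ} (hl : l.Nodup) {x : ℕ} (hx : x ∈ l) :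
    rankOf l.toFinset (listBallot l) x = l.idxOf x + 1 := by
  have habove : l.toFinset.filter (fun b => listBallot l b x) = (l.take (l.idxOf x)).toFinset := by
    ext b
    rw [mem_filter, List.mem_toFinset, List.mem_toFinset, listBallot]
    constructor
    · exact fun ⟨hb, _, _, hlt⟩ => (List.mem_take_iff_idxOf_lt hb).2 hlt
    · intro hb
      have hbl := List.mem_of_mem_take hb
      exact ⟨hbl, hbl, hx, (List.mem_take_iff_idxOf_lt hbl).1 hb⟩
  rw [rankOf, habove, List.toFinset_card_of_nodup (hl.sublist (List.take_sublist _ _)),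
    List.length_take_of_le (List.idxOf_le_length)]

theorem ranksFirst_listBallot (x : ℕ) (l : List ℕ) :
    RanksFirst (x :: l).toFinset (listBallot (x :: l)) x := by
  refine ⟨List.mem_toFinset.2 List.mem_cons_self, fun y hy hyx => ?_⟩
  rw [List.mem_toFinset] at hy
  refine ⟨List.mem_cons_self, hy, ?_⟩
  rw [List.idxOf_cons_self, List.idxOf_cons_ne _ (Ne.symm hyx)]
  exact Nat.succ_pos _

theorem getD_mem_of_mem_range {α : Type*} {l : List α} {d : α} {i : ℕ}
    (hi : i ∈ range l.length) : l.getD i d ∈ l := by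
  rw [List.getD_eq_getElem _ _ (mem_range.1 hi)]
  exact List.getElem_mem _

def ofRankings (X : Finset ℕ) (hX : X.Nonempty) (rs : List (List ℕ)) (hrs : rs ≠ [])
    (hperm : ∀ l ∈ rs, l.Nodup ∧ l.toFinset = X) : Profile where
  voters := range rs.length
  cands := X
  voters_nonempty := ⟨0, mem_range.2 (List.length_pos_of_ne_nil hrs)⟩
  cands_nonempty := hX
  ballot i := listBallot (rs.getD i [])
  ballot_lin i hi := by
    rw [← (hperm _ (getD_mem_of_mem_range hi)).2]
    exact isLinOn_listBallot _

theorem nthMaj_ofRankings_iff {X : Finset ℕ} {hX : X.Nonempty} {rs : List (List ℕ)}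
    {hrs : rs ≠ []} {hperm : ∀ l ∈ rs, l.Nodup ∧ l.toFinset = X} {n x : ℕ} (hx : x ∈ X) :
    nthMaj (ofRankings X hX rs hrs hperm) n x ↔
      rs.length < 2 * #{i ∈ range rs.length | (rs.getD i []).idxOf x < n} := by
  have hrank : ∀ i ∈ range rs.length,
      rankOf X (listBallot (rs.getD i [])) x ≤ n ↔ (rs.getD i []).idxOf x < n := by
    intro i hi
    obtain ⟨hnodup, hX⟩ := hperm _ (getD_mem_of_mem_range (d := []) hi)
    subst hX
    rw [rankOf_listBallot hnodup (List.mem_toFinset.1 hx)]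
    omega
  change #(range rs.length) <
    2 * #{i ∈ range rs.length | rankOf X (listBallot (rs.getD i [])) x ≤ n} ↔ _
  rw [card_range, filter_congr hrank]

theorem addVoter_ofRankings_append {X : Finset ℕ} {hX : X.Nonempty} {rs : List (List ℕ)}
    {hrs : rs ≠ []} {hperm : ∀ l ∈ rs, l.Nodup ∧ l.toFinset = X} {x : ℕ} {l : List ℕ}
    {hrs' : rs ++ [x :: l] ≠ []} {hperm' : ∀ l' ∈ rs ++ [x :: l], l'.Nodup ∧ l'.toFinset = X} :
    AddVoter (ofRankings X hX rs hrs hperm) (ofRankings X hX (rs ++ [x :: l]) hrs' hperm')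
      rs.length x := by
  refine ⟨rfl, notMem_range_self, ?_, fun i hi a b => ?_, ?_⟩
  · change range (rs ++ [x :: l]).length = insert rs.length (range rs.length)
    rw [List.length_append, List.length_singleton, range_add_one]
  · change listBallot ((rs ++ [x :: l]).getD i []) a b ↔ listBallot (rs.getD i []) a b
    rw [List.getD_append _ _ _ _ (mem_range.1 hi)]
  · change RanksFirst X (listBallot ((rs ++ [x :: l]).getD rs.length [])) x
    rw [List.getD_append_right _ _ _ _ le_rfl, Nat.sub_self, List.getD_cons_zero,
      ← (hperm' _ (List.mem_append_right _ (List.mem_singleton_self _))).2]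
    exact ranksFirst_listBallot x l

/-- With candidates `a, b, c, d, e` encoded as `0, 1, 2, 3, 4`: the ballots
`abced, aecbd, becda, cdabe`. -/
def exampleRankings : List (List ℕ) :=
  [[0, 1, 2, 4, 3], [0, 4, 2, 1, 3], [1, 4, 2, 3, 0], [2, 3, 0, 1, 4]]

/-- The ballot `cebda`. -/
def newRanking : List ℕ := [2, 4, 1, 3, 0]

theorem exampleRankings_append_perm :
    ∀ l ∈ exampleRankings ++ [newRanking], l.Nodup ∧ l.toFinset = range 5 := by
  decide

def exampleProfile : Profile :=
  ofRankings (range 5) nonempty_range_add_one exampleRankings (List.cons_ne_nil _ _)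
    fun l hl => exampleRankings_append_perm l (List.mem_append_left _ hl)

def exampleProfile' : Profile :=
  ofRankings (range 5) nonempty_range_add_one (exampleRankings ++ [newRanking])
    (List.append_ne_nil_of_right_ne_nil _ (List.cons_ne_nil _ _)) exampleRankings_append_perm

theorem bucklinLevel_exampleProfile : bucklinLevel exampleProfile = 3 := by
  refine bucklinLevel_eq (x := 2) three_pos (by decide)
    ((nthMaj_ofRankings_iff (by decide)).2 (by decide))
    fun y hy => (nthMaj_ofRankings_iff hy).not.2 ?_
  revert y
  decide

theorem bucklinLevel_exampleProfile' : bucklinLevel exampleProfile' = 2 := by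
  refine bucklinLevel_eq (x := 4) two_pos (by decide)
    ((nthMaj_ofRankings_iff (by decide)).2 (by decide))
    fun y hy => (nthMaj_ofRankings_iff hy).not.2 ?_
  revert y
  decide

theorem simplifiedBucklin_violates_PI :
    ∃ (P P' : Profile) (j x : ℕ),
      x ∈ SimplifiedBucklin P ∧ AddVoter P P' j x ∧ x ∉ SimplifiedBucklin P' := by
  refine ⟨exampleProfile, exampleProfile', 4, 2, ?_, addVoter_ofRankings_append, ?_⟩
  · rw [SimplifiedBucklin, bucklinLevel_exampleProfile, mem_filter]
    exact ⟨by decide, (nthMaj_ofRankings_iff (by decide)).2 (by decide)⟩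
  · rw [SimplifiedBucklin, bucklinLevel_exampleProfile', mem_filter]
    exact fun ⟨hc, hmaj⟩ => absurd ((nthMaj_ofRankings_iff hc).1 hmaj) (by decide)
end

section
/- The Llull voting method violates positive involvement: there exists a profile P, a candidate x ∈ Llull(P), and a profile P' obtained from P by adding one new voter whose ballot ranks x in first place, such that x ∉ Llull(P'). (A witness: P is the 5-voter profile on candidates {a,b,c} with ballots abc, abc, bca, cab, cab, in which Llull(P) = {a,b,c}; adding a voter with ballot bac yields Llull(P') = {a}, so b loses.) -/
open scoped Classical

/-- The margin of `a` over `b` in the profile `P`. -/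
noncomputable def marginP (P : Profile) (a b : ℕ) : ℤ :=
  ((P.voters.filter (fun i => P.ballot i a b)).card : ℤ) -
    ((P.voters.filter (fun i => P.ballot i b a)).card : ℤ)

/-- The Llull score of `a`: the number of candidates `b ≠ a` with positive margin of `a`
over `b`, plus the number of candidates `b ≠ a` with zero margin of `a` over `b`. -/
noncomputable def llullScore (P : Profile) (a : ℕ) : ℕ :=
  (P.cands.filter (fun b => b ≠ a ∧ 0 < marginP P a b)).card +
    (P.cands.filter (fun b => b ≠ a ∧ marginP P a b = 0)).card

/-- The Llull winners: the candidates with maximal Llull score. -/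
noncomputable def Llull (P : Profile) : Finset ℕ :=
  P.cands.filter (fun x => ∀ y ∈ P.cands, llullScore P y ≤ llullScore P x)

/-- Rank function for the witness profile: voters 0,1 vote abc, voter 2 votes bca,
voters 3,4 vote cab, voter 5 votes bac. -/
def myRk (i a : ℕ) : ℕ :=
  if i = 2 then (a + 2) % 3
  else if i = 3 ∨ i = 4 then (a + 1) % 3
  else if i = 5 then (if a ≤ 1 then 1 - a else a)
  else a

def myBal (i a b : ℕ) : Prop := a < 3 ∧ b < 3 ∧ myRk i a < myRk i b

instance : ∀ i a b, Decidable (myBal i a b) := fun _ _ _ => by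
  unfold myBal; infer_instance

lemma myRk_inj (i a b : ℕ) (ha : a < 3) (hb : b < 3) (hab : a ≠ b) :
    myRk i a ≠ myRk i b := by
  unfold myRk
  split_ifs <;> omega

lemma myBal_lin (i : ℕ) : IsLinOn (Finset.range 3) (myBal i) := by
  refine ⟨fun a b h => ⟨Finset.mem_range.2 h.1, Finset.mem_range.2 h.2.1⟩,
    fun a h => lt_irrefl _ h.2.2,
    fun a b c h1 h2 => ⟨h1.1, h2.2.1, lt_trans h1.2.2 h2.2.2⟩,
    fun a ha b hb hab => ?_⟩
  have ha' := Finset.mem_range.1 ha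
  have hb' := Finset.mem_range.1 hb
  rcases lt_or_gt_of_ne (myRk_inj i a b ha' hb' hab) with h | h
  · exact Or.inl ⟨ha', hb', h⟩
  · exact Or.inr ⟨hb', ha', h⟩

def P0 : Profile where
  voters := Finset.range 5
  cands := Finset.range 3
  voters_nonempty := ⟨0, by decide⟩
  cands_nonempty := ⟨0, by decide⟩
  ballot := myBal
  ballot_lin := fun i _ => myBal_lin i

def P1 : Profile where
  voters := Finset.range 6
  cands := Finset.range 3
  voters_nonempty := ⟨0, by decide⟩
  cands_nonempty := ⟨0, by decide⟩
  ballot := myBal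
  ballot_lin := fun i _ => myBal_lin i

lemma margin_eval (s : Finset ℕ) (a b : ℕ) :
    ((s.filter (fun i => myBal i a b)).card : ℤ) -
      ((s.filter (fun i => myBal i b a)).card : ℤ) =
    ((s.filter (fun i => myBal i a b)).card : ℤ) -
      ((s.filter (fun i => myBal i b a)).card : ℤ) := rfl

lemma marginP0 (a b : ℕ) :
    marginP P0 a b = (((Finset.range 5).filter (fun i => myBal i a b)).card : ℤ) -
      (((Finset.range 5).filter (fun i => myBal i b a)).card : ℤ) := by
  unfold marginP P0
  congr 3 <;> exact Finset.filter_congr_decidable _ _ _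

lemma marginP1 (a b : ℕ) :
    marginP P1 a b = (((Finset.range 6).filter (fun i => myBal i a b)).card : ℤ) -
      (((Finset.range 6).filter (fun i => myBal i b a)).card : ℤ) := by
  unfold marginP P1
  congr 3 <;> exact Finset.filter_congr_decidable _ _ _

lemma score_P0 : llullScore P0 0 = 1 ∧ llullScore P0 1 = 1 ∧ llullScore P0 2 = 1 := by
  have h01 : marginP P0 0 1 = 3 := by rw [marginP0]; decide
  have h02 : marginP P0 0 2 = -1 := by rw [marginP0]; decide
  have h10 : marginP P0 1 0 = -3 := by rw [marginP0]; decide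
  have h12 : marginP P0 1 2 = 1 := by rw [marginP0]; decide
  have h20 : marginP P0 2 0 = 1 := by rw [marginP0]; decide
  have h21 : marginP P0 2 1 = -1 := by rw [marginP0]; decide
  unfold llullScore
  have hc : P0.cands = Finset.range 3 := rfl
  rw [hc]
  refine ⟨?_, ?_, ?_⟩ <;>
  · rw [show (Finset.range 3) = {0, 1, 2} from by decide]
    simp [Finset.filter_insert, Finset.filter_singleton, h01, h02, h10, h12, h20, h21]

lemma score_P1 : llullScore P1 0 = 2 ∧ llullScore P1 1 = 1 ∧ llullScore P1 2 = 1 := by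
  have h01 : marginP P1 0 1 = 2 := by rw [marginP1]; decide
  have h02 : marginP P1 0 2 = 0 := by rw [marginP1]; decide
  have h10 : marginP P1 1 0 = -2 := by rw [marginP1]; decide
  have h12 : marginP P1 1 2 = 2 := by rw [marginP1]; decide
  have h20 : marginP P1 2 0 = 0 := by rw [marginP1]; decide
  have h21 : marginP P1 2 1 = -2 := by rw [marginP1]; decide
  unfold llullScore
  have hc : P1.cands = Finset.range 3 := rfl
  rw [hc]
  refine ⟨?_, ?_, ?_⟩ <;>
  · rw [show (Finset.range 3) = {0, 1, 2} from by decide]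
    simp [Finset.filter_insert, Finset.filter_singleton, h01, h02, h10, h12, h20, h21]

theorem llull_violates_PI :
    ∃ (P P' : Profile) (j x : ℕ),
      x ∈ Llull P ∧ AddVoter P P' j x ∧ x ∉ Llull P' := by
  obtain ⟨s0, s1, s2⟩ := score_P0
  obtain ⟨t0, t1, t2⟩ := score_P1
  refine ⟨P0, P1, 5, 1, ?_, ?_, ?_⟩
  · unfold Llull
    rw [Finset.mem_filter]
    refine ⟨by decide, fun y hy => ?_⟩
    have hy3 := Finset.mem_range.1 (show y ∈ Finset.range 3 from hy)
    interval_cases y <;> simp [s0, s1, s2]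
  · refine ⟨rfl, by decide, by decide, fun i _ a b => Iff.rfl, by decide, ?_⟩
    intro y hy hy1
    have : y ∈ Finset.range 3 := hy
    fin_cases this
    · exact ⟨by decide, by decide, by decide⟩
    · exact absurd rfl hy1
    · exact ⟨by decide, by decide, by decide⟩
  · unfold Llull
    rw [Finset.mem_filter]
    intro ⟨_, h⟩
    have := h 0 (by decide)
    rw [t0, t1] at this
    omega
end

section
/- The Gillies Uncovered Set voting method violates positive involvement: there exists a profile P, a candidate x ∈ UC(P), and a profile P' obtained from P by adding one new voter whose ballot ranks x in first place, such that x ∉ UC(P'). (A witness: P is the 5-voter profile on candidates {a,b,c} with ballots abc, abc, bca, cab, cab, in which UC(P) = {a,b,c}; adding a voter with ballot bac yields UC(P') = {a,c}, so b loses.) -/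
open scoped Classical

/-- `a` Gillies covers `b` in `P`. -/
def GilliesCovers (P : Profile) (a b : ℕ) : Prop :=
  0 < marginP P a b ∧ ∀ c ∈ P.cands, 0 < marginP P c a → 0 < marginP P c b

/-- The Gillies Uncovered Set: the candidates not Gillies covered by any candidate. -/
noncomputable def UCGillies (P : Profile) : Finset ℕ :=
  P.cands.filter (fun x => ¬ ∃ y ∈ P.cands, GilliesCovers P y x)



def X3 : Finset ℕ := {0,1,2}

def rk (i n : ℕ) : ℕ :=
  if i < 2 then n
  else if i = 2 then (n+2)%3
  else if i ≤ 4 then (n+1)%3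
  else (if n = 0 then 1 else if n = 1 then 0 else 2)

def bal (i a b : ℕ) : Prop := a ∈ X3 ∧ b ∈ X3 ∧ rk i a < rk i b

instance balDec : ∀ i a b, Decidable (bal i a b) := fun i a b => by
  unfold bal; infer_instance

lemma bal_lin (i : ℕ) : IsLinOn X3 (bal i) := by
  refine ⟨fun a b h => ⟨h.1, h.2.1⟩, fun a h => lt_irrefl _ h.2.2,
    fun a b c h1 h2 => ⟨h1.1, h2.2.1, h1.2.2.trans h2.2.2⟩, ?_⟩
  intro a ha b hb hab
  have : rk i a ≠ rk i b := by
    fin_cases ha <;> fin_cases hb <;>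
      first
        | exact absurd rfl hab
        | (unfold rk; split_ifs <;> simp_all)
  rcases lt_or_gt_of_ne this with h | h
  · exact Or.inl ⟨ha, hb, h⟩
  · exact Or.inr ⟨hb, ha, h⟩

noncomputable def Pwit : Profile where
  voters := {0,1,2,3,4}
  cands := X3
  voters_nonempty := ⟨0, by decide⟩
  cands_nonempty := ⟨0, by decide⟩
  ballot := bal
  ballot_lin := fun i _ => bal_lin i

noncomputable def Pwit' : Profile where
  voters := insert 5 Pwit.voters
  cands := X3
  voters_nonempty := ⟨5, Finset.mem_insert_self _ _⟩
  cands_nonempty := ⟨0, by decide⟩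
  ballot := bal
  ballot_lin := fun i _ => bal_lin i

lemma margin_eval_s14 (P : Profile) (hbl : P.ballot = bal) (a b : ℕ) :
    marginP P a b =
      ((P.voters.filter (fun i => bal i a b)).card : ℤ) -
        ((P.voters.filter (fun i => bal i b a)).card : ℤ) := by
  unfold marginP
  simp only [hbl, Finset.filter_congr_decidable]

theorem ucGillies_violates_PI :
    ∃ (P P' : Profile) (j x : ℕ),
      x ∈ UCGillies P ∧ AddVoter P P' j x ∧ x ∉ UCGillies P' := by
  have e : ∀ a b, marginP Pwit a b =
      ((Pwit.voters.filter (fun i => bal i a b)).card : ℤ) -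
        ((Pwit.voters.filter (fun i => bal i b a)).card : ℤ) :=
    margin_eval_s14 Pwit rfl
  have e' : ∀ a b, marginP Pwit' a b =
      ((Pwit'.voters.filter (fun i => bal i a b)).card : ℤ) -
        ((Pwit'.voters.filter (fun i => bal i b a)).card : ℤ) :=
    margin_eval_s14 Pwit' rfl
  refine ⟨Pwit, Pwit', 5, 1, ?_, ?_, ?_⟩
  · rw [UCGillies, Finset.mem_filter]
    refine ⟨by decide, ?_⟩
    rintro ⟨y, hy, hm, hall⟩
    rw [e] at hm
    fin_cases hy
    · have h2 := hall 2 (by decide) (by rw [e]; decide)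
      rw [e] at h2
      exact absurd h2 (by decide)
    · exact absurd hm (by decide)
    · exact absurd hm (by decide)
  · refine ⟨rfl, by decide, rfl, fun i _ a b => Iff.rfl, by decide, ?_⟩
    intro y hy hne
    show bal 5 1 y
    fin_cases hy
    · decide
    · exact absurd rfl hne
    · decide
  · rw [UCGillies, Finset.mem_filter]
    rintro ⟨-, h⟩
    apply h
    refine ⟨0, by decide, ?_, ?_⟩
    · rw [e']; decide
    · intro c hc hcm
      rw [e'] at hcm
      fin_cases hc <;> exact absurd hcm (by decide)
end
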